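/- arXiv:2412.03505 — 6 statements merged into one kernel-verified Lean document; each statement's English description precedes it below -/
import Mathlib

section
/- Let G be a bipartite graph with parts A and B. If the expected size of the common neighbourhood of t uniformly random distinct vertices of B is computed, then it is at least |A| · C(λ|B|, t) / C(|B|, t), where λ is the edge density of G and C(·,·) denotes binomial coefficients. -/
open scoped Classical

/-!
Counting pairs `(a, S)` with `S ⊆ N(a)` shows that the sum of `|N(S)|` over the `t`-subsets `S`
of `B` equals `∑ₐ C(deg a, t)`. The function `x ↦ C(x, t)`, truncated to vanish below `t - 1`,
is convex, so by Jensen this sum is at least `|A| · C(d, t)` for the average degree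
`d = λ|B|`, and the hypothesis `λ|B| ≥ t` places `d` where the truncation is inactive.
-/

open Finset

/-- `∏_{i<t} (x - i)⁺`: the descending factorial on `ℕ`, and the descending Pochhammer
polynomial for `x ≥ t - 1`, but convex on all of `ℝ`. -/
noncomputable def truncDescFactorial (t : ℕ) (x : ℝ) : ℝ := ∏ i ∈ range t, max (x - i) 0

lemma truncDescFactorial_zero : truncDescFactorial 0 = 1 := by
  ext x
  simp [truncDescFactorial]

lemma truncDescFactorial_succ (t : ℕ) :
    truncDescFactorial (t + 1) = truncDescFactorial t * fun x : ℝ => max (x - t) 0 := by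
  ext x
  simp only [truncDescFactorial, prod_range_succ, Pi.mul_apply]

lemma truncDescFactorial_nonneg (t : ℕ) (x : ℝ) : 0 ≤ truncDescFactorial t x :=
  prod_nonneg fun _ _ => le_max_right _ _

lemma monotone_max_sub_zero (c : ℝ) : Monotone fun x : ℝ => max (x - c) 0 :=
  fun _ _ h => max_le_max_right 0 (sub_le_sub_right h c)

lemma monotone_truncDescFactorial (t : ℕ) : Monotone (truncDescFactorial t) := by
  induction t with
  | zero => rw [truncDescFactorial_zero]; exact monotone_const
  | succ t ih =>
    rw [truncDescFactorial_succ]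
    exact ih.mul (monotone_max_sub_zero t) (truncDescFactorial_nonneg t)
      (fun _ => le_max_right _ _)

lemma convexOn_truncDescFactorial (t : ℕ) : ConvexOn ℝ Set.univ (truncDescFactorial t) := by
  induction t with
  | zero => rw [truncDescFactorial_zero]; exact convexOn_const 1 convex_univ
  | succ t ih =>
    have hmax : ConvexOn ℝ Set.univ fun x : ℝ => max (x - t) 0 :=
      ((convexOn_id convex_univ).sub (concaveOn_const _ convex_univ)).sup
        (convexOn_const 0 convex_univ)
    rw [truncDescFactorial_succ]
    exact ih.mul hmax (fun x _ => truncDescFactorial_nonneg t x) (fun _ _ => le_max_right _ _)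
      (((monotone_truncDescFactorial t).monovary (monotone_max_sub_zero t)).monovaryOn _)

lemma truncDescFactorial_natCast (t n : ℕ) :
    truncDescFactorial t n = n.descFactorial t := by
  rw [Nat.descFactorial_eq_prod_range, Nat.cast_prod]
  refine prod_congr rfl fun i _ => ?_
  rcases le_or_gt i n with h | h
  · rw [Nat.cast_sub h, max_eq_left (sub_nonneg.mpr (by exact_mod_cast h))]
  · rw [Nat.sub_eq_zero_of_le h.le, Nat.cast_zero,
      max_eq_right (sub_nonpos.mpr (by exact_mod_cast h.le))]

lemma choose_eq_truncDescFactorial_div (t n : ℕ) :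
    (n.choose t : ℝ) = truncDescFactorial t n / t.factorial := by
  rw [truncDescFactorial_natCast, Nat.descFactorial_eq_factorial_mul_choose, Nat.cast_mul,
    mul_div_cancel_left₀ _ (by positivity)]

lemma truncDescFactorial_eq_descPochhammer_eval {t : ℕ} {x : ℝ} (hx : (t : ℝ) ≤ x + 1) :
    truncDescFactorial t x = (descPochhammer ℝ t).eval x := by
  rw [descPochhammer_eval_eq_prod_range]
  refine prod_congr rfl fun i hi => max_eq_left ?_
  have : (i : ℝ) + 1 ≤ t := by exact_mod_cast mem_range.mp hi
  linarith

/-- Jensen's inequality with uniform weights, stated so that it also holds for `s = ∅`. -/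
lemma ConvexOn.card_mul_map_le_sum_map {ι : Type*} {s : Finset ι} {f : ℝ → ℝ}
    (hf : ConvexOn ℝ Set.univ f) {p : ι → ℝ} {x : ℝ} (hx : #s * x = ∑ i ∈ s, p i) :
    #s * f x ≤ ∑ i ∈ s, f (p i) := by
  rcases s.eq_empty_or_nonempty with rfl | hs
  · simp
  have hcard : (0 : ℝ) < #s := by exact_mod_cast hs.card_pos
  have hmean : ∑ i ∈ s, (#s : ℝ)⁻¹ • p i = x := by
    rw [← smul_sum, hx.symm, smul_eq_mul, inv_mul_cancel_left₀ hcard.ne']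
  have hjensen := hf.map_sum_le (fun _ _ => inv_nonneg.mpr hcard.le)
    (by rw [sum_const, nsmul_eq_mul, mul_inv_cancel₀ hcard.ne']) (fun i _ => Set.mem_univ (p i))
  rw [hmean, ← smul_sum, smul_eq_mul] at hjensen
  calc (#s : ℝ) * f x ≤ #s * ((#s : ℝ)⁻¹ * ∑ i ∈ s, f (p i)) := by gcongr
    _ = ∑ i ∈ s, f (p i) := mul_inv_cancel_left₀ hcard.ne' _

section DoubleCounting

variable {α β : Type*} [Fintype α] [Fintype β] (E : α → β → Prop)

lemma sum_card_filter_eq_card_filter_prod :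
    ∑ a, #{b | E a b} = #{p : α × β | E p.1 p.2} := by
  simp only [card_filter, Fintype.sum_prod_type]

lemma sum_card_commonNeighbors_eq_sum_choose (t : ℕ) :
    ∑ S ∈ powersetCard t univ, #{a | ∀ b ∈ S, E a b} = ∑ a, (#{b | E a b}).choose t := by
  calc ∑ S ∈ powersetCard t univ, #{a | ∀ b ∈ S, E a b}
      = ∑ a, #{S ∈ powersetCard t univ | ∀ b ∈ S, E a b} := by
        simp only [card_filter]
        exact sum_comm
    _ = ∑ a, (#{b | E a b}).choose t := sum_congr rfl fun a _ => by
        rw [← card_powersetCard]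
        congr 1
        ext S
        simp only [mem_filter, mem_powersetCard, subset_iff, mem_univ, true_and]
        tauto

end DoubleCounting

theorem stmt_6_general (t : ℕ) {A B : Type} [Fintype A] [Fintype B]
    (E : A → B → Prop) (lam : ℝ)
    (hdens : ((Finset.univ.filter fun p : A × B => E p.1 p.2).card : ℝ) =
      lam * (Fintype.card A : ℝ) * (Fintype.card B : ℝ))
    (hlamB : (t : ℝ) ≤ lam * (Fintype.card B : ℝ)) :
    (Fintype.card A : ℝ) *
        ((descPochhammer ℝ t).eval (lam * (Fintype.card B : ℝ)) / (Nat.factorial t : ℝ)) ≤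
      ∑ S ∈ Finset.univ.powersetCard t (α := B),
        ((Finset.univ.filter fun a : A => ∀ b ∈ S, E a b).card : ℝ) := by
  have hdeg : (#(univ : Finset A) : ℝ) * (lam * Fintype.card B) = ∑ a, (#{b | E a b} : ℝ) := by
    rw [← Nat.cast_sum, sum_card_filter_eq_card_filter_prod, hdens, card_univ]
    ring
  have hjensen := (convexOn_truncDescFactorial t).card_mul_map_le_sum_map hdeg
  rw [← Nat.cast_sum, sum_card_commonNeighbors_eq_sum_choose, Nat.cast_sum]
  simp only [choose_eq_truncDescFactorial_div, ← sum_div, mul_div_assoc', card_univ] at hjensen ⊢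
  rw [← truncDescFactorial_eq_descPochhammer_eval (by linarith)]
  gcongr

/-- Let `G = (A,B;E)` be a bipartite graph with edge density `λ` and `λ|B| ≥ t`. Then the
average, over all `t`-subsets `S ⊆ B`, of the size of the common neighbourhood `N(S)` is at
least `|A| · C(λ|B|, t) / C(|B|, t)`; equivalently, the sum over `t`-subsets `S` of `|N(S)|`
is at least `|A| · C(λ|B|, t)`, where `C(x, t) = x(x-1)⋯(x-t+1)/t!` is the generalized
binomial coefficient. -/
theorem stmt_6 (t : ℕ) (ht : 1 ≤ t) {A B : Type} [Fintype A] [Fintype B]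
    (E : A → B → Prop) (lam : ℝ)
    (hdens : ((Finset.univ.filter fun p : A × B => E p.1 p.2).card : ℝ) =
      lam * (Fintype.card A : ℝ) * (Fintype.card B : ℝ))
    (hlamB : (t : ℝ) ≤ lam * (Fintype.card B : ℝ)) :
    (Fintype.card A : ℝ) *
        ((descPochhammer ℝ t).eval (lam * (Fintype.card B : ℝ)) / (Nat.factorial t : ℝ)) ≤
      ∑ S ∈ Finset.univ.powersetCard t (α := B),
        ((Finset.univ.filter fun a : A => ∀ b ∈ S, E a b).card : ℝ) :=
  stmt_6_general t E lam hdens hlamB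
end

section
/- Let G be an n × n × n tripartite graph with minimum degree at least n + τ, with functions f⁺, f⁻ as in the booster setup. If uv is an r-booster forward edge and V_i is the part containing neither u nor v, then the number of vertices of V_i adjacent to neither u nor v is at most deg(u,v) − τ − r, where deg(u,v) is the number of common neighbours of u and v. -/
open scoped Classical

open Finset

/- Write `W` for the third part and `A`, `B` for the neighbourhoods of `u`, `v` in `W`.
Inclusion–exclusion gives `#(W \ (A ∪ B)) = n - #A - #B + #(A ∩ B)`. Since `#A ≥ f⁻(u)`,
`#B ≥ f⁺(v) ≥ f⁺(u) + r` and `f⁺(u) + f⁻(u) = n + τ`, this is at most `#(A ∩ B) - τ - r`. -/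

theorem card_filter_not_and_not_add_card_filter_add_card_filter {α : Type*} (s : Finset α)
    (p q : α → Prop) [DecidablePred p] [DecidablePred q] :
    #{x ∈ s | ¬p x ∧ ¬q x} + #{x ∈ s | p x} + #{x ∈ s | q x} = #s + #{x ∈ s | p x ∧ q x} := by
  have hsplit := card_filter_add_card_filter_not (s := s) (fun x => p x ∨ q x)
  have hincl := card_union_add_card_inter {x ∈ s | p x} {x ∈ s | q x}
  rw [← filter_or, ← filter_and] at hincl
  simp only [not_or] at hsplit
  omega

theorem stmt_8_general (n τ r : ℕ) {V : Type} [Fintype V] (G : SimpleGraph V) (P : V → Fin 3)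
    (hparts : ∀ i : Fin 3, (Finset.univ.filter fun v => P v = i).card = n)
    (fp fm : V → ℕ)
    (hfp : ∀ v, τ ≤ fp v ∧ fp v ≤ (Finset.univ.filter fun w => G.Adj v w ∧ P w = P v + 1).card)
    (hfm : ∀ v, τ ≤ fm v ∧ fm v ≤ (Finset.univ.filter fun w => G.Adj v w ∧ P w = P v + 2).card)
    (hsum : ∀ v, fp v + fm v = n + τ)
    (u v : V) (hfor : P v = P u + 1)
    (hboost : fp u + r ≤ fp v) :
    ((Finset.univ.filter fun w : V => P w = P u + 2 ∧ ¬G.Adj u w ∧ ¬G.Adj v w).card : ℤ) ≤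
      ((Finset.univ.filter fun w : V => G.Adj u w ∧ G.Adj v w ∧ P w = P u + 2).card : ℤ)
        - (τ : ℤ) - (r : ℤ) := by
  set W : Finset V := {w | P w = P u + 2}
  have hW : #W = n := hparts _
  have hv : P v + 1 = P u + 2 := by rw [hfor, add_assoc]; rfl
  have hA : fm u ≤ #{w ∈ W | G.Adj u w} := by
    simpa only [W, filter_filter, and_comm] using (hfm u).2
  have hB : fp v ≤ #{w ∈ W | G.Adj v w} := by
    simpa only [W, filter_filter, and_comm, hv] using (hfp v).2
  have hcommon : #{w | G.Adj u w ∧ G.Adj v w ∧ P w = P u + 2} =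
      #{w ∈ W | G.Adj u w ∧ G.Adj v w} := by
    simp only [W, filter_filter, and_comm, and_left_comm]
  have hnone : #{w | P w = P u + 2 ∧ ¬G.Adj u w ∧ ¬G.Adj v w} =
      #{w ∈ W | ¬G.Adj u w ∧ ¬G.Adj v w} := by
    simp only [W, filter_filter]
  have hincl := card_filter_not_and_not_add_card_filter_add_card_filter W (G.Adj u) (G.Adj v)
  have hfu := hsum u
  omega

/-- In an `n × n × n` tripartite graph with minimum degree at least `n + τ`, equipped with
`f⁺, f⁻` as in the booster setup, for every `r`-booster forward edge `uv` the number of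
vertices of the third part adjacent to neither `u` nor `v` is at most `deg(u,v) - τ - r`. -/
theorem stmt_8 (n τ r : ℕ) {V : Type} [Fintype V] (G : SimpleGraph V) (P : V → Fin 3)
    (hparts : ∀ i : Fin 3, (Finset.univ.filter fun v => P v = i).card = n)
    (htrip : ∀ u v, G.Adj u v → P u ≠ P v)
    (hdeg : ∀ v, n + τ ≤ G.degree v)
    (fp fm : V → ℕ)
    (hfp : ∀ v, τ ≤ fp v ∧ fp v ≤ (Finset.univ.filter fun w => G.Adj v w ∧ P w = P v + 1).card)
    (hfm : ∀ v, τ ≤ fm v ∧ fm v ≤ (Finset.univ.filter fun w => G.Adj v w ∧ P w = P v + 2).card)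
    (hsum : ∀ v, fp v + fm v = n + τ)
    (u v : V) (huv : G.Adj u v) (hfor : P v = P u + 1)
    (hboost : fp u + r ≤ fp v) :
    ((Finset.univ.filter fun w : V => P w = P u + 2 ∧ ¬G.Adj u w ∧ ¬G.Adj v w).card : ℤ) ≤
      ((Finset.univ.filter fun w : V => G.Adj u w ∧ G.Adj v w ∧ P w = P u + 2).card : ℤ)
        - (τ : ℤ) - (r : ℤ) :=
  stmt_8_general n τ r G P hparts fp fm hfp hfm hsum u v hfor hboost
end

section
/- Suppose there are positive constants c, C such that c·n^{2−1/t} ≤ z(n; t) ≤ C·n^{2−1/t} for all n, where z(n;t) is the maximum number of edges in an n × n bipartite graph with no K_{t,t}. Then for any σ ≤ (c/(4C))·n there exists a σ × n bipartite graph containing no K_{t,t} in which every vertex in the part of size σ has degree at least (c/4)·n^{1−1/t}. -/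
open scoped Classical

/-- A bipartite graph (given by a relation `E`) contains `K_{t,t}`. -/
def hasKtt {α β : Type} (E : α → β → Prop) (t : ℕ) : Prop :=
  ∃ (S : Finset α) (T : Finset β), S.card = t ∧ T.card = t ∧ ∀ a ∈ S, ∀ b ∈ T, E a b

/-- The number of edges of a bipartite graph given by a relation `E`. -/
noncomputable def edgeCount {α β : Type} [Fintype α] [Fintype β] (E : α → β → Prop) : ℕ :=
  (Finset.univ.filter fun p : α × β => E p.1 p.2).card

/-!
Take a `K_{t,t}`-free `n × n` graph `G` with at least `c n^{2-1/t}` edges and keep the set `A`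
of its rows of degree at least `d = (c/4) n^{1-1/t}`; the other rows carry at most
`n d = (c/4) n^{2-1/t}` edges. Every `t`-set of rows has fewer than `t` common neighbours, so
counting `t`-stars (Kővári–Sós–Turán) and the power-mean inequality bound the edges of the
`A × n` subgraph by `n^{1-1/t} (t-1)^{1/t} |A| + n (t-1)`, while the complete `(t-1) × (t-1)` graph shows
`(t-1)^{1/t} ≤ C`. When `t - 1 ≤ (c/2) n^{1-1/t}` this gives `|A| ≥ (c/4C) n ≥ σ`;
otherwise `d < t - 1`, and joining every row to the same `min(t-1, n)` columns already works.
-/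

open Finset Fintype

section
variable {α β γ : Type}

noncomputable def degree [Fintype β] (E : α → β → Prop) (a : α) : ℕ :=
  (univ.filter fun b => E a b).card

theorem hasKtt.of_comp_left {E : α → β → Prop} {t : ℕ} {f : γ → α}
    (hf : Function.Injective f) (h : hasKtt (fun c b => E (f c) b) t) : hasKtt E t := by
  obtain ⟨S, T, hS, hT, hST⟩ := h
  exact ⟨S.map ⟨f, hf⟩, T, by simpa using hS, hT, by simpa using hST⟩

theorem not_hasKtt_of_forall_mem {E : α → β → Prop} {t : ℕ} (ht : 1 ≤ t) (B : Finset β)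
    (hB : B.card < t) (hE : ∀ a b, E a b → b ∈ B) : ¬hasKtt E t := by
  rintro ⟨S, T, hS, hT, hST⟩
  obtain ⟨a, ha⟩ : S.Nonempty := card_pos.1 (by omega)
  have := card_le_card fun b hb => hE a b (hST a ha b hb)
  omega

theorem exists_not_hasKtt_degree_eq [Fintype β] {t : ℕ} (ht : 1 ≤ t) :
    ∃ E : α → β → Prop, ¬hasKtt E t ∧ ∀ a, degree E a = min (t - 1) (card β) := by
  obtain ⟨B, -, hB⟩ :=
    exists_subset_card_eq (s := (univ : Finset β)) (n := min (t - 1) (card β)) (by simp)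
  exact ⟨fun _ b => b ∈ B, not_hasKtt_of_forall_mem ht B (by omega) fun _ _ h => h,
    fun a => by simp [degree, hB]⟩

variable [Fintype β]

theorem edgeCount_eq_sum_degree [Fintype α] (E : α → β → Prop) :
    edgeCount E = ∑ a, degree E a := by
  simp only [edgeCount, degree, card_filter, Fintype.sum_prod_type]

theorem edgeCount_flip [Fintype α] (E : α → β → Prop) :
    edgeCount (flip E) = edgeCount E := by
  simp only [edgeCount_eq_sum_degree, degree, card_filter]
  exact sum_comm

theorem edgeCount_le_card_mul [Fintype α] (E : α → β → Prop) :
    edgeCount E ≤ card α * card β :=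
  (card_filter_le _ _).trans_eq (by simp)

theorem edgeCount_true [Fintype α] :
    edgeCount (fun (_ : α) (_ : β) => True) = card α * card β := by
  simp [edgeCount]

theorem edgeCount_restrict (E : α → β → Prop) (A : Finset α) :
    edgeCount (fun (a : A) b => E a b) = ∑ a ∈ A, degree E a := by
  rw [edgeCount_eq_sum_degree]
  exact sum_coe_sort A (degree E)

theorem exists_le_degree_of_le_card [Fintype α] {G : α → β → Prop} {t : ℕ}
    (hG : ¬hasKtt G t) {d : ℝ} {σ : ℕ}
    (hσ : σ ≤ (univ.filter fun a => d ≤ degree G a).card) :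
    ∃ E : Fin σ → β → Prop, ¬hasKtt E t ∧ ∀ i, d ≤ degree E i := by
  set A := univ.filter fun a => d ≤ degree G a
  let f : Fin σ ↪ A := (Fin.castLEEmb hσ).trans A.equivFin.symm.toEmbedding
  exact ⟨fun i b => G (f i) b,
    fun h => hG (h.of_comp_left (Subtype.val_injective.comp f.injective)),
    fun i => (mem_filter.1 (f i).2).2⟩

theorem edgeCount_le_sum_degree_add [Fintype α] (E : α → β → Prop) {d : ℝ} (hd : 0 ≤ d) :
    (edgeCount E : ℝ) ≤
      ∑ a ∈ univ.filter (fun a => d ≤ degree E a), (degree E a : ℝ) + card α * d := by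
  rw [edgeCount_eq_sum_degree, Nat.cast_sum,
    ← sum_filter_add_sum_filter_not univ (fun a => d ≤ degree E a)]
  gcongr
  calc _ ≤ ∑ a ∈ univ.filter (fun a => ¬d ≤ degree E a), d :=
        sum_le_sum fun a ha => (not_le.1 (mem_filter.1 ha).2).le
    _ ≤ card α * d := by
      rw [sum_const, nsmul_eq_mul]
      exact mul_le_mul_of_nonneg_right (by exact_mod_cast card_le_univ _) hd

theorem sum_choose_degree_flip_le [Fintype α] {E : α → β → Prop} {t : ℕ}
    (hE : ¬hasKtt E t) :
    ∑ b, (degree (flip E) b).choose t ≤ (t - 1) * (card α).choose t := by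
  let r : β → Finset α → Prop := fun b T => T ⊆ univ.filter (E · b)
  have hcommon :
      ∀ T ∈ (univ : Finset α).powersetCard t, (univ.bipartiteBelow r T).card ≤ t - 1 := by
    intro T hT
    by_contra! hlarge
    obtain ⟨T', hT', hT'card⟩ := exists_subset_card_eq (Nat.le_of_pred_lt hlarge)
    refine hE ⟨T, T', (mem_powersetCard.1 hT).2, hT'card, fun a ha b hb => ?_⟩
    exact (mem_filter.1 ((mem_filter.1 (hT' hb)).2 ha)).2
  calc ∑ b, (degree (flip E) b).choose t
      = ∑ b, ((univ.powersetCard t).bipartiteAbove r b).card := by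
        refine sum_congr rfl fun b _ => ?_
        rw [degree, ← card_powersetCard]
        congr 1
        ext T
        simp only [bipartiteAbove, mem_filter, mem_powersetCard, subset_univ, true_and, and_comm]
        rfl
    _ = ∑ T ∈ univ.powersetCard t, (univ.bipartiteBelow r T).card :=
        sum_card_bipartiteAbove_eq_sum_card_bipartiteBelow _
    _ ≤ (univ.powersetCard t).card * (t - 1) := sum_le_card_nsmul _ _ _ hcommon
    _ = (t - 1) * (card α).choose t := by rw [card_powersetCard, card_univ, mul_comm]

theorem sum_pow_le_of_not_hasKtt [Fintype α] {E : α → β → Prop} {t : ℕ} (ht : 1 ≤ t)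
    (hE : ¬hasKtt E t) :
    (∑ b, (degree (flip E) b + 1 - t)) ^ t ≤ card β ^ (t - 1) * ((t - 1) * card α ^ t) := by
  obtain ⟨k, rfl⟩ : ∃ k, t = k + 1 := ⟨t - 1, by omega⟩
  rw [Nat.add_sub_cancel]
  refine (pow_sum_le_card_mul_sum_pow (fun _ _ => Nat.zero_le _) k).trans ?_
  refine Nat.mul_le_mul_left _ ?_
  calc ∑ b, (degree (flip E) b + 1 - (k + 1)) ^ (k + 1)
      ≤ ∑ b, (k + 1).factorial * (degree (flip E) b).choose (k + 1) := by
        gcongr with b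
        rw [← Nat.descFactorial_eq_factorial_mul_choose]
        exact Nat.pow_sub_le_descFactorial _ _
    _ = (k + 1).factorial * ∑ b, (degree (flip E) b).choose (k + 1) := (mul_sum _ _ _).symm
    _ ≤ (k + 1).factorial * ((k + 1 - 1) * (card α).choose (k + 1)) :=
        Nat.mul_le_mul_left _ (sum_choose_degree_flip_le hE)
    _ ≤ (k + 1 - 1) * card α ^ (k + 1) := by
        rw [mul_left_comm, ← Nat.descFactorial_eq_factorial_mul_choose]
        exact Nat.mul_le_mul_left _ (Nat.descFactorial_le_pow _ _)

theorem pow_le_of_not_hasKtt [Fintype α] {E : α → β → Prop} {t : ℕ} (ht : 1 ≤ t)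
    (hE : ¬hasKtt E t) {s : ℝ} (hs₀ : 0 ≤ s)
    (hs : s ≤ edgeCount E - card β * ((t : ℝ) - 1)) :
    s ^ t ≤ card β ^ (t - 1) * (((t : ℝ) - 1) * card α ^ t) := by
  have hsum : s ≤ ∑ b, ((degree (flip E) b + 1 - t : ℕ) : ℝ) := by
    calc s ≤ ∑ b, ((degree (flip E) b : ℝ) - ((t : ℝ) - 1)) := by
          rwa [sum_sub_distrib, ← Nat.cast_sum, ← edgeCount_eq_sum_degree, edgeCount_flip,
            sum_const, card_univ, nsmul_eq_mul]
      _ ≤ _ := sum_le_sum fun b _ => by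
          have := (Nat.cast_le (α := ℝ)).2 (le_tsub_add (b := degree (flip E) b + 1) (a := t))
          push_cast at this
          linarith
  have := sum_pow_le_of_not_hasKtt ht hE
  calc s ^ t ≤ (∑ b, ((degree (flip E) b + 1 - t : ℕ) : ℝ)) ^ t := by gcongr
    _ ≤ _ := by exact_mod_cast this

end

theorem rpow_two_sub_inv_eq_mul {x : ℝ} (hx : 0 < x) (t : ℝ) :
    x ^ (2 - 1 / t) = x * x ^ (1 - 1 / t) := by
  rw [show 2 - 1 / t = 1 + (1 - 1 / t) by ring, Real.rpow_add hx, Real.rpow_one]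

theorem rpow_one_sub_inv_pow {x : ℝ} (hx : 0 ≤ x) {t : ℕ} (ht : 1 ≤ t) :
    (x ^ (1 - 1 / (t : ℝ))) ^ t = x ^ (t - 1) := by
  rw [← Real.rpow_natCast, ← Real.rpow_mul hx, ← Real.rpow_natCast]
  congr 1
  have : (t : ℝ) ≠ 0 := by positivity
  push_cast [Nat.cast_sub ht]
  field_simp

theorem le_pow_of_sq_le_mul_rpow {s C : ℝ} (hs : 0 ≤ s) (hC : 0 ≤ C) {t : ℕ} (ht : 1 ≤ t)
    (h : s ^ 2 ≤ C * s ^ (2 - 1 / (t : ℝ))) : s ≤ C ^ t := by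
  rcases hs.eq_or_lt with rfl | hs
  · positivity
  have hroot : (s ^ (1 / (t : ℝ))) ^ t = s := by
    rw [← Real.rpow_natCast, ← Real.rpow_mul hs.le, one_div_mul_cancel (by positivity),
      Real.rpow_one]
  have hsplit : s ^ (2 - 1 / (t : ℝ)) * s ^ (1 / (t : ℝ)) = s ^ 2 := by
    rw [← Real.rpow_add hs, sub_add_cancel, Real.rpow_two]
  have : s ^ (1 / (t : ℝ)) ≤ C := by
    refine le_of_mul_le_mul_left ?_ (Real.rpow_pos_of_pos hs (2 - 1 / (t : ℝ)))
    rwa [hsplit, mul_comm]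
  calc s = (s ^ (1 / (t : ℝ))) ^ t := hroot.symm
    _ ≤ C ^ t := by gcongr

theorem sub_one_le_pow_of_edgeCount_le {t : ℕ} (ht : 1 ≤ t) {C : ℝ} (hC : 0 ≤ C)
    (hupper : ∀ E : Fin (t - 1) → Fin (t - 1) → Prop, ¬hasKtt E t →
      (edgeCount E : ℝ) ≤ C * ((t - 1 : ℕ) : ℝ) ^ (2 - 1 / (t : ℝ))) :
    (t : ℝ) - 1 ≤ C ^ t := by
  have hcomplete := hupper (fun _ _ => True) (not_hasKtt_of_forall_mem ht univ (by simp; omega)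
    fun _ b _ => mem_univ b)
  rw [edgeCount_true, Fintype.card_fin] at hcomplete
  have := le_pow_of_sq_le_mul_rpow (Nat.cast_nonneg (t - 1)) hC ht
    (by rw [sq]; exact_mod_cast hcomplete)
  rwa [Nat.cast_sub ht, Nat.cast_one] at this

theorem le_card_filter_le_degree {n t : ℕ} (hn : 0 < n) (ht : 1 ≤ t) {c C : ℝ} (hc : 0 < c)
    (hC : 0 < C) {G : Fin n → Fin n → Prop} (hG : ¬hasKtt G t)
    (hGe : c * (n : ℝ) ^ (2 - 1 / (t : ℝ)) ≤ edgeCount G) (hCt : (t : ℝ) - 1 ≤ C ^ t)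
    (hlarge : (t : ℝ) - 1 ≤ c / 2 * (n : ℝ) ^ (1 - 1 / (t : ℝ))) :
    c / (4 * C) * n ≤
      (univ.filter fun a => c / 4 * (n : ℝ) ^ (1 - 1 / (t : ℝ)) ≤ degree G a).card := by
  have hn' : (0 : ℝ) < n := by exact_mod_cast hn
  rw [rpow_two_sub_inv_eq_mul hn'] at hGe
  set X := (n : ℝ) ^ (1 - 1 / (t : ℝ))
  set A := univ.filter fun a => c / 4 * X ≤ degree G a
  have hX₀ : 0 ≤ X := by positivity
  have hGA : c / 4 * n * X ≤ edgeCount (fun (a : A) b => G a b) - n * ((t : ℝ) - 1) := by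
    have hlow := edgeCount_le_sum_degree_add G (d := c / 4 * X) (by positivity)
    rw [Fintype.card_fin] at hlow
    rw [edgeCount_restrict]
    push_cast
    nlinarith [mul_le_mul_of_nonneg_left hlarge hn'.le]
  have hkst := pow_le_of_not_hasKtt ht (fun h => hG (h.of_comp_left Subtype.val_injective))
    (s := c / 4 * n * X) (by positivity) (by rwa [Fintype.card_fin])
  simp only [Fintype.card_fin, Fintype.card_coe] at hkst
  have : (c / 4 * n) ^ t * n ^ (t - 1) ≤ (C * A.card) ^ t * n ^ (t - 1) := by
    calc (c / 4 * n) ^ t * n ^ (t - 1) = (c / 4 * n * X) ^ t := by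
          rw [mul_pow _ X, rpow_one_sub_inv_pow hn'.le ht]
      _ ≤ n ^ (t - 1) * (((t : ℝ) - 1) * A.card ^ t) := hkst
      _ ≤ (C * A.card) ^ t * n ^ (t - 1) := by
          rw [mul_pow, mul_comm]
          gcongr
  have := (pow_le_pow_iff_left₀ (by positivity) (by positivity) (by omega)).1
    (le_of_mul_le_mul_right this (by positivity))
  rw [div_mul_eq_mul_div, div_le_iff₀ (by positivity)]
  linarith

/-- If `c n^{2-1/t} ≤ z(n;t) ≤ C n^{2-1/t}` for all `n`, then for any `σ ≤ (c/4C) n` there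
is a `σ × n` bipartite graph with no `K_{t,t}` in which every vertex of the part of size
`σ` has degree at least `(c/4) n^{1-1/t}`. -/
theorem stmt_13 (t : ℕ) (ht : 1 ≤ t) (c C : ℝ) (hc : 0 < c) (hC : 0 < C)
    (hlower : ∀ n : ℕ, ∃ E : Fin n → Fin n → Prop, ¬hasKtt E t ∧
      c * (n : ℝ) ^ (2 - 1 / (t : ℝ)) ≤ (edgeCount E : ℝ))
    (hupper : ∀ n : ℕ, ∀ E : Fin n → Fin n → Prop, ¬hasKtt E t →
      (edgeCount E : ℝ) ≤ C * (n : ℝ) ^ (2 - 1 / (t : ℝ)))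
    (n σ : ℕ) (hσ : (σ : ℝ) ≤ c / (4 * C) * (n : ℝ)) :
    ∃ E : Fin σ → Fin n → Prop, ¬hasKtt E t ∧
      ∀ a : Fin σ, c / 4 * (n : ℝ) ^ (1 - 1 / (t : ℝ)) ≤
        ((Finset.univ.filter fun b : Fin n => E a b).card : ℝ) := by
  obtain ⟨G, hG, hGe⟩ := hlower n
  rcases Nat.eq_zero_or_pos σ with rfl | hσ₀
  · exact exists_le_degree_of_le_card hG (Nat.zero_le _)
  have hn : 0 < n := Nat.pos_of_ne_zero fun h => by subst h; simp at hσ; omega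
  have hn' : (0 : ℝ) < n := by exact_mod_cast hn
  by_cases hlarge : (t : ℝ) - 1 ≤ c / 2 * (n : ℝ) ^ (1 - 1 / (t : ℝ))
  · have hA := le_card_filter_le_degree hn ht hc hC hG hGe
      (sub_one_le_pow_of_edgeCount_le ht hC.le (hupper (t - 1))) hlarge
    exact exists_le_degree_of_le_card hG (by exact_mod_cast hσ.trans hA)
  · rw [not_le] at hlarge
    have hcX : 0 ≤ c * (n : ℝ) ^ (1 - 1 / (t : ℝ)) := by positivity
    have hdense : c * (n : ℝ) ^ (1 - 1 / (t : ℝ)) ≤ n := by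
      have hcard : (edgeCount G : ℝ) ≤ n * n := by
        exact_mod_cast (edgeCount_le_card_mul G).trans_eq (by simp)
      rw [rpow_two_sub_inv_eq_mul hn'] at hGe
      nlinarith
    obtain ⟨E, hE, hdeg⟩ := exists_not_hasKtt_degree_eq (α := Fin σ) (β := Fin n) ht
    refine ⟨E, hE, fun a => ?_⟩
    change _ ≤ (degree E a : ℝ)
    rw [hdeg a, Nat.cast_min, Nat.cast_sub ht, Fintype.card_fin, Nat.cast_one]
    exact le_min (by linarith) (by linarith)
end

section
/- Let t ≥ 2 and suppose there exists: (a) an n × n × n triangle-free tripartite graph G₀ with parts V1, V2, V3 containing sets U1 ⊂ V1 and U2 ⊂ V2 of size σ such that every vertex of U1 is adjacent to all of V2, every vertex of U2 is adjacent to all of V1, and every vertex outside U1 ∪ U2 has degree at least n + σ; and (b) a bipartite graph H with parts of sizes σ and n containing no K_{t,t} in which every vertex of the σ-part has degree at least d. Then the graph G obtained from G₀ by adding a copy of H between U1 and V3 and a copy of H between U2 and V3 has minimum degree at least n + min(σ, d) and contains no K_{t,t,t}. -/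
open scoped Classical

/-!
Every edge of `G` joins two classes of `P`, so the sides of a `K_{t,t,t}` lie in `V1`, `V2`, `V3`
in some order, and the edges between its `V1`- and `V2`-sides are edges of `G₀`. If no edge
between its `V1`- and `V3`-sides lies in `G₀`, they all come from the first copy of `H`, which
then contains a `K_{t,t}`. Otherwise a `G₀`-edge `a c` forces every `b` of the `V2`-side to reach
`c` through the second copy (else `a b c` is a triangle of `G₀`), so `b ∈ U2`. As `b` is joined to
all of `V1`, a `G₀`-edge from `b` to the `V3`-side would confine the `G₀`-neighbours of its other
endpoint to `V2`, against the degree bound `n + σ`; so the second copy of `H` contains a `K_{t,t}`.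
-/

open Finset Function

theorem Set.notMem_range_of_forall_apply_eq {V ι α : Type*} {f : α → V} {P : V → ι} {k : ι}
    (hf : ∀ i, P (f i) = k) {x : V} (hx : P x ≠ k) : x ∉ range f := by
  rintro ⟨i, rfl⟩
  exact hx (hf i)

theorem Finset.exists_apply_eq_of_injective_of_card_le {V α : Type*} [Fintype α] {f : α → V}
    {U : Finset V} (hf : Injective f) (hfU : ∀ i, f i ∈ U) (hU : #U ≤ Fintype.card α) {v : V}
    (hv : v ∈ U) : ∃ i, f i = v := by
  obtain ⟨i, -, hi⟩ := surjOn_of_injOn_of_card_le (s := univ) f (fun i _ => hfU i)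
    hf.injOn (by simpa using hU) hv
  exact ⟨i, hi⟩

namespace SimpleGraph

variable {V ι α β : Type*}

theorem exists_perm_of_pairwise_isCompleteBetween [Finite ι] {G : SimpleGraph V} {P : V → ι}
    (hP : ∀ x y, G.Adj x y → P x ≠ P y) {S : ι → Finset V} (hS : ∀ i, (S i).Nonempty)
    (hcomplete : Pairwise fun i j => G.IsCompleteBetween (S i) (S j)) :
    ∃ e : ι ≃ ι, ∀ i, ∀ x ∈ S i, P x = e i := by
  choose y hy using hS
  have hinj : Injective (P ∘ y) := fun i j h =>
    by_contra fun hij => hP _ _ (hcomplete hij (hy i) (hy j)) h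
  refine ⟨Equiv.ofBijective _ hinj.bijective_of_finite, fun i x hx => ?_⟩
  obtain ⟨j, hj⟩ := hinj.bijective_of_finite.2 (P x)
  obtain rfl : j = i := by_contra fun hji => hP _ _ (hcomplete hji (hy j) hx) hj
  exact hj.symm

theorem CliqueFree.degree_le_card_filter [Fintype V] [DecidableEq ι] {G : SimpleGraph V}
    (htf : G.CliqueFree 3) {P : V → ι} (hP : ∀ x y, G.Adj x y → P x ≠ P y) {u c : V}
    (huc : G.Adj u c) {k : ι} (hu : ∀ w, P w = k → G.Adj u w) :
    G.degree c ≤ #{w | P w ≠ P c ∧ P w ≠ k} := by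
  refine card_le_card fun w hw => ?_
  rw [mem_neighborFinset] at hw
  refine mem_filter.2 ⟨mem_univ w, (hP _ _ hw).symm, fun hwk => ?_⟩
  exact isIndepSet_neighborSet_of_triangleFree G htf u huc (hu w hwk) hw.ne hw

def HasBiclique (r : α → β → Prop) (s t : ℕ) : Prop :=
  ∃ (S : Finset α) (T : Finset β), #S = s ∧ #T = t ∧ ∀ a ∈ S, ∀ b ∈ T, r a b

theorem hasBiclique_of_forall_exists {f : α → V} {g : β → V} (hf : Injective f)
    (hg : Injective g) {r : α → β → Prop} {X Y : Finset V} (hX : X.Nonempty) (hY : Y.Nonempty)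
    (h : ∀ x ∈ X, ∀ y ∈ Y, ∃ i j, x = f i ∧ y = g j ∧ r i j) : HasBiclique r #X #Y := by
  obtain ⟨x₀, hx₀⟩ := hX
  obtain ⟨y₀, hy₀⟩ := hY
  have hXf : ∀ x ∈ X, x ∈ Set.range f := fun x hx =>
    let ⟨i, _, hi, _⟩ := h x hx y₀ hy₀; ⟨i, hi.symm⟩
  have hYg : ∀ y ∈ Y, y ∈ Set.range g := fun y hy =>
    let ⟨_, j, _, hj, _⟩ := h x₀ hx₀ y hy; ⟨j, hj.symm⟩
  refine ⟨X.preimage f hf.injOn, Y.preimage g hg.injOn, ?_, ?_, fun i hi j hj => ?_⟩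
  · rw [card_preimage, filter_true_of_mem hXf]
  · rw [card_preimage, filter_true_of_mem hYg]
  · obtain ⟨i', j', hi', hj', hr⟩ := h _ (mem_preimage.1 hi) _ (mem_preimage.1 hj)
    rwa [hf hi', hg hj']

def addCopies (G₀ : SimpleGraph V) (H : α → β → Prop) (f₁ f₂ : α → V) (f₃ : β → V) :
    SimpleGraph V :=
  G₀ ⊔ fromRel fun x y =>
    (∃ i j, x = f₁ i ∧ y = f₃ j ∧ H i j) ∨ (∃ i j, x = f₂ i ∧ y = f₃ j ∧ H i j)

variable {G₀ : SimpleGraph V} {H : α → β → Prop} {f₁ f₂ : α → V} {f₃ : β → V}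

theorem addCopies_comm : addCopies G₀ H f₁ f₂ f₃ = addCopies G₀ H f₂ f₁ f₃ := by
  simp only [addCopies, or_comm]

theorem le_addCopies : G₀ ≤ addCopies G₀ H f₁ f₂ f₃ := le_sup_left

theorem addCopies_adj_of_rel {i : α} {j : β} (hne : f₁ i ≠ f₃ j) (h : H i j) :
    (addCopies G₀ H f₁ f₂ f₃).Adj (f₁ i) (f₃ j) :=
  Or.inr ⟨hne, Or.inl (Or.inl ⟨i, j, rfl, rfl, h⟩)⟩

theorem adj_of_addCopies_adj {x y : V} (h : (addCopies G₀ H f₁ f₂ f₃).Adj x y)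
    (hx : x ∉ Set.range f₃) (hy : y ∉ Set.range f₃) : G₀.Adj x y := by
  rcases h with h | ⟨-, (⟨i, j, -, rfl, -⟩ | ⟨i, j, -, rfl, -⟩) |
    (⟨i, j, -, rfl, -⟩ | ⟨i, j, -, rfl, -⟩)⟩
  exacts [h, (hy ⟨j, rfl⟩).elim, (hy ⟨j, rfl⟩).elim, (hx ⟨j, rfl⟩).elim, (hx ⟨j, rfl⟩).elim]

theorem exists_eq_of_addCopies_adj {x y : V} (h : (addCopies G₀ H f₁ f₂ f₃).Adj x y)
    (h₀ : ¬G₀.Adj x y) (hx : x ∉ Set.range f₂) (hy₁ : y ∉ Set.range f₁)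
    (hy₂ : y ∉ Set.range f₂) : ∃ i j, x = f₁ i ∧ y = f₃ j ∧ H i j := by
  rcases h with h | ⟨-, (h | ⟨i, j, rfl, -⟩) | (⟨i, j, rfl, -⟩ | ⟨i, j, rfl, -⟩)⟩
  exacts [absurd h h₀, h, (hx ⟨i, rfl⟩).elim, (hy₁ ⟨i, rfl⟩).elim, (hy₂ ⟨i, rfl⟩).elim]

theorem addCopies_adj_ne {P : V → ι} (hP : ∀ x y, G₀.Adj x y → P x ≠ P y)
    (hP₁ : ∀ i j, P (f₁ i) ≠ P (f₃ j)) (hP₂ : ∀ i j, P (f₂ i) ≠ P (f₃ j)) :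
    ∀ x y, (addCopies G₀ H f₁ f₂ f₃).Adj x y → P x ≠ P y := by
  rintro x y (h | ⟨-, (⟨i, j, rfl, rfl, -⟩ | ⟨i, j, rfl, rfl, -⟩) |
    (⟨i, j, rfl, rfl, -⟩ | ⟨i, j, rfl, rfl, -⟩)⟩)
  exacts [hP _ _ h, hP₁ i j, hP₂ i j, (hP₁ i j).symm, (hP₂ i j).symm]

theorem card_add_card_le_degree_addCopies [Fintype V] [Fintype β] {P : V → ι} {k : ι} {i : α}
    (hf₃ : Injective f₃) (hP₃ : ∀ j, P (f₃ j) ≠ k) (hne : ∀ j, P (f₁ i) ≠ P (f₃ j))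
    (hfull : ∀ w, P w = k → G₀.Adj (f₁ i) w) :
    #{w | P w = k} + #{j | H i j} ≤ (addCopies G₀ H f₁ f₂ f₃).degree (f₁ i) := by
  have hdisj : Disjoint ({w | P w = k} : Finset V) (image f₃ {j | H i j}) := by
    refine Finset.disjoint_left.2 fun w hw hw' => ?_
    obtain ⟨j, -, rfl⟩ := mem_image.1 hw'
    exact hP₃ j (mem_filter.1 hw).2
  rw [← card_image_of_injective _ hf₃, ← card_union_of_disjoint hdisj,
    ← card_neighborFinset_eq_degree]
  refine card_le_card fun w hw => ?_
  rw [mem_neighborFinset]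
  rcases mem_union.1 hw with hw | hw
  · exact le_addCopies (hfull w (mem_filter.1 hw).2)
  · obtain ⟨j, hj, rfl⟩ := mem_image.1 hw
    exact addCopies_adj_of_rel (fun h => hne j (congrArg P h)) (mem_filter.1 hj).2

theorem hasBiclique_of_isCompleteBetween_addCopies [Fintype V] [Fintype α] {P : V → Fin 3}
    (htf : G₀.CliqueFree 3) (hP : ∀ x y, G₀.Adj x y → P x ≠ P y)
    (hP₁ : ∀ i, P (f₁ i) = 0) (hP₂ : ∀ i, P (f₂ i) = 1) (hP₃ : ∀ j, P (f₃ j) = 2)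
    (hf₁ : Injective f₁) (hf₂ : Injective f₂) (hf₃ : Injective f₃)
    (hfull : ∀ i w, P w = 0 → G₀.Adj (f₂ i) w)
    (hdeg : ∀ c, P c = 2 → #{w | P w = 1} + Fintype.card α ≤ G₀.degree c)
    {A B C : Finset V} (hA : ∀ a ∈ A, P a = 0) (hB : ∀ b ∈ B, P b = 1) (hC : ∀ c ∈ C, P c = 2)
    (hAne : A.Nonempty) (hBne : B.Nonempty) (hCne : C.Nonempty)
    (hAB : (addCopies G₀ H f₁ f₂ f₃).IsCompleteBetween A B)
    (hAC : (addCopies G₀ H f₁ f₂ f₃).IsCompleteBetween A C)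
    (hBC : (addCopies G₀ H f₁ f₂ f₃).IsCompleteBetween B C) :
    HasBiclique H #A #C ∨ HasBiclique H #B #C := by
  have hC₁ : ∀ c ∈ C, c ∉ Set.range f₁ := fun c hc =>
    Set.notMem_range_of_forall_apply_eq hP₁ (by simp [hC c hc])
  have hC₂ : ∀ c ∈ C, c ∉ Set.range f₂ := fun c hc =>
    Set.notMem_range_of_forall_apply_eq hP₂ (by simp [hC c hc])
  by_cases hAC₀ : ∃ a ∈ A, ∃ c ∈ C, G₀.Adj a c
  · obtain ⟨a₀, ha₀, c₀, hc₀, hac₀⟩ := hAC₀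
    have hBC₀ : ∀ b ∈ B, ∀ c ∈ C, ¬G₀.Adj b c → ∃ i j, b = f₂ i ∧ c = f₃ j ∧ H i j :=
      fun b hb c hc hbc => exists_eq_of_addCopies_adj (addCopies_comm ▸ hBC hb hc) hbc
        (Set.notMem_range_of_forall_apply_eq hP₁ (by simp [hB b hb])) (hC₂ c hc) (hC₁ c hc)
    have hBf₂ : ∀ b ∈ B, ∃ i, b = f₂ i := by
      intro b hb
      have hab : G₀.Adj a₀ b := adj_of_addCopies_adj (hAB ha₀ hb)
        (Set.notMem_range_of_forall_apply_eq hP₃ (by simp [hA a₀ ha₀]))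
        (Set.notMem_range_of_forall_apply_eq hP₃ (by simp [hB b hb]))
      have hbc₀ : ¬G₀.Adj b c₀ := fun hbc =>
        isIndepSet_neighborSet_of_triangleFree G₀ htf a₀ hab hac₀ hbc.ne hbc
      obtain ⟨i, -, rfl, -⟩ := hBC₀ b hb c₀ hc₀ hbc₀
      exact ⟨i, rfl⟩
    refine .inr (hasBiclique_of_forall_exists hf₂ hf₃ hBne hCne fun b hb c hc =>
      hBC₀ b hb c hc ?_)
    intro hbc
    obtain ⟨i, rfl⟩ := hBf₂ b hb
    have hdeg_le := htf.degree_le_card_filter hP hbc (hfull i)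
    have hclass : #{w | P w ≠ P c ∧ P w ≠ 0} = #{w | P w = 1} := by
      congr 1
      exact filter_congr fun w _ => by rw [hC c hc]; omega
    rw [hclass] at hdeg_le
    have hα : 0 < Fintype.card α := Fintype.card_pos_iff.2 ⟨i⟩
    have := hdeg c (hC c hc)
    omega
  · push Not at hAC₀
    exact .inl (hasBiclique_of_forall_exists hf₁ hf₃ hAne hCne fun a ha c hc =>
      exists_eq_of_addCopies_adj (hAC ha hc) (hAC₀ a ha c hc)
        (Set.notMem_range_of_forall_apply_eq hP₂ (by simp [hA a ha])) (hC₁ c hc) (hC₂ c hc))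

theorem hasBiclique_of_pairwise_isCompleteBetween_addCopies [Fintype V] [Fintype α]
    {P : V → Fin 3} (htf : G₀.CliqueFree 3) (hP : ∀ x y, G₀.Adj x y → P x ≠ P y)
    (hP₁ : ∀ i, P (f₁ i) = 0) (hP₂ : ∀ i, P (f₂ i) = 1) (hP₃ : ∀ j, P (f₃ j) = 2)
    (hf₁ : Injective f₁) (hf₂ : Injective f₂) (hf₃ : Injective f₃)
    (hfull : ∀ i w, P w = 0 → G₀.Adj (f₂ i) w)
    (hdeg : ∀ c, P c = 2 → #{w | P w = 1} + Fintype.card α ≤ G₀.degree c)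
    {t : ℕ} (ht : 0 < t) {S : Fin 3 → Finset V} (hS : ∀ k, #(S k) = t)
    (hcomplete : Pairwise fun k l => (addCopies G₀ H f₁ f₂ f₃).IsCompleteBetween (S k) (S l)) :
    HasBiclique H t t := by
  have hne : ∀ k, (S k).Nonempty := fun k => card_pos.1 (hS k ▸ ht)
  have hadj : ∀ x y, (addCopies G₀ H f₁ f₂ f₃).Adj x y → P x ≠ P y :=
    addCopies_adj_ne hP (fun i j => by simp [hP₁, hP₃]) (fun i j => by simp [hP₂, hP₃])
  obtain ⟨e, he⟩ := exists_perm_of_pairwise_isCompleteBetween hadj hne hcomplete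
  have hclass : ∀ k, ∀ x ∈ S (e.symm k), P x = k := fun k x hx => by simpa using he _ x hx
  have hcomplete' : ∀ k l, k ≠ l →
      (addCopies G₀ H f₁ f₂ f₃).IsCompleteBetween (S (e.symm k)) (S (e.symm l)) :=
    fun k l hkl => hcomplete (e.symm.injective.ne hkl)
  rcases hasBiclique_of_isCompleteBetween_addCopies htf hP hP₁ hP₂ hP₃ hf₁ hf₂ hf₃ hfull hdeg
    (hclass 0) (hclass 1) (hclass 2) (hne _) (hne _) (hne _) (hcomplete' 0 1 (by decide))
    (hcomplete' 0 2 (by decide)) (hcomplete' 1 2 (by decide)) with h | h <;>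
    simpa only [hS] using h

end SimpleGraph

open SimpleGraph

/-- Extremal construction: let `G₀` be an `n × n × n` triangle-free tripartite graph with
sets `U1 ⊆ V1`, `U2 ⊆ V2` of size `σ` joined completely to `V2`, `V1` respectively and with
all other degrees at least `n + σ`, and let `H` be a `σ × n` bipartite graph with no
`K_{t,t}` whose `σ`-side degrees are all at least `d`. Then adding a copy of `H` between
`U1` and `V3` and a copy of `H` between `U2` and `V3` yields a graph with minimum degree at
least `n + min σ d` containing no `K_{t,t,t}`. -/
theorem stmt_14 (t σ n d : ℕ) (ht : 2 ≤ t)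
    {V : Type} [Fintype V] (G₀ : SimpleGraph V) (P : V → Fin 3)
    (hparts : ∀ i : Fin 3, (Finset.univ.filter fun v => P v = i).card = n)
    (htrip : ∀ u v, G₀.Adj u v → P u ≠ P v)
    (htf : G₀.CliqueFree 3)
    (U1 U2 : Finset V)
    (hU1P : ∀ v ∈ U1, P v = 0) (hU2P : ∀ v ∈ U2, P v = 1)
    (hU1card : U1.card = σ) (hU2card : U2.card = σ)
    (hU1full : ∀ v ∈ U1, ∀ w, P w = 1 → G₀.Adj v w)
    (hU2full : ∀ v ∈ U2, ∀ w, P w = 0 → G₀.Adj v w)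
    (hdeg : ∀ v, v ∉ U1 → v ∉ U2 → n + σ ≤ G₀.degree v)
    (H : Fin σ → Fin n → Prop)
    (hHfree : ¬∃ (S : Finset (Fin σ)) (T : Finset (Fin n)),
      S.card = t ∧ T.card = t ∧ ∀ a ∈ S, ∀ b ∈ T, H a b)
    (hHdeg : ∀ i : Fin σ, d ≤ (Finset.univ.filter fun j : Fin n => H i j).card)
    (f1 : Fin σ → V) (hf1inj : Function.Injective f1) (hf1 : ∀ i, f1 i ∈ U1)
    (f2 : Fin σ → V) (hf2inj : Function.Injective f2) (hf2 : ∀ i, f2 i ∈ U2)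
    (f3 : Fin n → V) (hf3inj : Function.Injective f3) (hf3 : ∀ j, P (f3 j) = 2)
    (G : SimpleGraph V)
    (hG : G = G₀ ⊔ SimpleGraph.fromRel (fun x y =>
      (∃ i j, x = f1 i ∧ y = f3 j ∧ H i j) ∨ (∃ i j, x = f2 i ∧ y = f3 j ∧ H i j))) :
    (∀ v, n + min σ d ≤ G.degree v) ∧
    ¬∃ S1 S2 S3 : Finset V, S1.card = t ∧ S2.card = t ∧ S3.card = t ∧
      (∀ a ∈ S1, ∀ b ∈ S2, G.Adj a b) ∧
      (∀ a ∈ S1, ∀ c ∈ S3, G.Adj a c) ∧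
      (∀ b ∈ S2, ∀ c ∈ S3, G.Adj b c) := by
  change G = addCopies G₀ H f1 f2 f3 at hG
  subst hG
  have hP₁ : ∀ i, P (f1 i) = 0 := fun i => hU1P _ (hf1 i)
  have hP₂ : ∀ i, P (f2 i) = 1 := fun i => hU2P _ (hf2 i)
  refine ⟨fun v => ?_, ?_⟩
  · by_cases hv₁ : v ∈ U1
    · obtain ⟨i, rfl⟩ := exists_apply_eq_of_injective_of_card_le hf1inj hf1 (by simp [hU1card]) hv₁
      have := card_add_card_le_degree_addCopies (H := H) (f₂ := f2) hf3inj (by simp [hf3])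
        (by simp [hf3, hP₁]) (hU1full _ (hf1 i))
      grind [hparts 1, hHdeg i]
    by_cases hv₂ : v ∈ U2
    · obtain ⟨i, rfl⟩ := exists_apply_eq_of_injective_of_card_le hf2inj hf2 (by simp [hU2card]) hv₂
      have := card_add_card_le_degree_addCopies (H := H) (f₂ := f1) hf3inj (by simp [hf3])
        (by simp [hf3, hP₂]) (hU2full _ (hf2 i))
      rw [← addCopies_comm] at this
      grind [hparts 0, hHdeg i]
    · calc n + min σ d ≤ G₀.degree v := by grind [hdeg v hv₁ hv₂]
        _ ≤ _ := degree_le_of_le le_addCopies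
  · rintro ⟨S1, S2, S3, h1, h2, h3, h12, h13, h23⟩
    refine hHfree (hasBiclique_of_pairwise_isCompleteBetween_addCopies htf htrip hP₁ hP₂ hf3
      hf1inj hf2inj hf3inj (fun i => hU2full _ (hf2 i)) (fun c hc => ?_) (by omega)
      (S := ![S1, S2, S3]) (fun k => by fin_cases k <;> assumption) ?_)
    · simpa [hparts] using
        hdeg c (fun h => by simp [hU1P c h] at hc) (fun h => by simp [hU2P c h] at hc)
    · intro k l hkl
      fin_cases k <;> fin_cases l <;> simp_all [IsCompleteBetween] <;> intro x hx y hy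
      exacts [(h12 _ hy _ hx).symm, (h13 _ hy _ hx).symm, (h23 _ hy _ hx).symm]
end

section
/- For every integer k ≥ 1 and every positive integer σ, there exists an n × n × n triangle-free tripartite graph (with n = 3kσ) containing sets U1 ⊂ V1 and U2 ⊂ V2 of size σ such that every vertex of U1 has neighbourhood exactly V2, every vertex of U2 has neighbourhood exactly V1, and every other vertex has degree exactly n + σ. -/
/-!
Blow up the Andrásfai graph `Γ_{k+1}` on `{0, …, 3k+1}`, which is triangle-free and
`(k+1)`-regular, giving vertex `w` the weight `σ (3 - d w)`, where the deficit `d` is `2` at `0`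
and `2k+1`, `1` at `k` and `k+1`, and `0` elsewhere. The arcs `[0, k]`, `[k+1, 2k+1]`,
`[2k+2, 3k+1]` are independent and each has weight `3kσ`, so they form the three parts. A vertex
over `x` has degree `σ (3(k+1) - d(N(x)))`. The neighbourhoods of `0` and `2k+1` are the middle and
the first arc, giving `U1` and `U2`; every other `x` sees exactly two units of deficit, so its
degree is `(3k+1)σ`.
-/

open scoped Classical
open Finset SimpleGraph

theorem Fin.sum_divNat {M : Type*} [AddCommMonoid M] {m n : ℕ} (F : Fin m → M) :
    ∑ j : Fin (m * n), F j.divNat = n • ∑ t, F t := by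
  calc ∑ j : Fin (m * n), F j.divNat = ∑ j, F (finProdFinEquiv.symm j).1 := rfl
    _ = ∑ x : Fin m × Fin n, F x.1 := finProdFinEquiv.symm.sum_comp (F ·.1)
    _ = n • ∑ t, F t := by simp [Fintype.sum_prod_type, Finset.smul_sum]

theorem Finset.sum_range_add_div_three {M : Type*} [AddCommMonoid M] (h : ℕ → M) (k r : ℕ)
    (hr : r ≤ 3) :
    ∑ t ∈ range (3 * k), h ((t + r) / 3) + (r • h 0 + (3 - r) • h k) =
      3 • ∑ s ∈ range (k + 1), h s := by
  induction k with
  | zero => simp [← add_smul, Nat.add_sub_cancel' hr]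
  | succ k ih =>
    rw [show 3 * (k + 1) = 3 * k + 1 + 1 + 1 by ring, sum_range_succ _ (k + 1), smul_add, ← ih]
    simp only [sum_range_succ]
    rw [show (3 * k + r) / 3 = k + r / 3 by omega,
      show (3 * k + 1 + r) / 3 = k + (r + 1) / 3 by omega,
      show (3 * k + 1 + 1 + r) / 3 = k + (r + 2) / 3 by omega]
    interval_cases r <;>
      simp only [Nat.reduceAdd, Nat.reduceDiv, Nat.reduceSub, add_zero, zero_smul, one_smul] <;>
      abel

theorem SimpleGraph.CliqueFree.comap_fun {V W : Type*} {G : SimpleGraph W} {n : ℕ} (f : V → W)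
    (h : G.CliqueFree n) : (G.comap f).CliqueFree n := by
  intro s hs
  have hinj : Set.InjOn f s := fun a ha b hb hab =>
    by_contra fun hne => (comap_adj.1 (hs.1 ha hb hne)).ne hab
  refine h (s.image f) ⟨?_, by rw [card_image_of_injOn hinj, hs.2]⟩
  rw [coe_image]
  rintro _ ⟨a, ha, rfl⟩ _ ⟨b, hb, rfl⟩ hne
  exact hs.1 ha hb fun hab => hne (hab ▸ rfl)

theorem SimpleGraph.degree_comap {V W : Type*} [Fintype V] (G : SimpleGraph W) (f : V → W)
    (v : V) [Fintype ((G.comap f).neighborSet v)] :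
    (G.comap f).degree v = #{u | G.Adj (f v) (f u)} := by
  rw [← card_neighborSet_eq_degree, ← Fintype.card_coe]
  exact Fintype.card_congr (Equiv.subtypeEquivRight fun u => by simp)

namespace Andrasfai

/-- On `{0, …, 3k+1}` this is the Andrásfai graph `Γ_{k+1}` (`i ~ i + k+1, …, i + 2k+1` mod
`3k+2`): that window of residues is closed under negation, so it contains the cyclic difference
of two vertices iff it contains their plain distance. -/
def graph (k : ℕ) : SimpleGraph ℕ where
  Adj a b := k + 1 ≤ Nat.dist a b ∧ Nat.dist a b ≤ 2 * k + 1
  symm := ⟨fun a b h => by rwa [Nat.dist_comm]⟩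
  loopless := ⟨fun a h => by simp at h⟩

variable {k : ℕ}

theorem graph_adj {a b : ℕ} :
    (graph k).Adj a b ↔ k + 1 ≤ Nat.dist a b ∧ Nat.dist a b ≤ 2 * k + 1 := Iff.rfl

theorem cliqueFree_graph : (graph k).CliqueFree 3 := by
  intro s hs
  obtain ⟨a, b, c, hab, hac, hbc, -⟩ := is3Clique_iff.1 hs
  simp only [graph_adj, Nat.dist] at hab hac hbc
  omega

theorem card_filter_graph_adj {x : ℕ} (hx : x < 3 * k + 2) :
    #{w ∈ range (3 * k + 2) | (graph k).Adj x w} = k + 1 := by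
  simp only [graph_adj, Nat.dist]
  rcases le_or_gt x k with h | h
  · rw [show {w ∈ range (3 * k + 2) | _} = Icc (x + k + 1) (x + 2 * k + 1) by
      ext w; simp only [mem_filter, mem_range, mem_Icc]; omega]
    simp only [Nat.card_Icc]; omega
  rcases le_or_gt (2 * k + 1) x with h' | h'
  · rw [show {w ∈ range (3 * k + 2) | _} = Icc (x - (2 * k + 1)) (x - (k + 1)) by
      ext w; simp only [mem_filter, mem_range, mem_Icc]; omega]
    simp only [Nat.card_Icc]; omega
  · rw [show {w ∈ range (3 * k + 2) | _} = range (x - k) ∪ Icc (x + k + 1) (3 * k + 1) by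
      ext w; simp only [mem_filter, mem_range, mem_Icc, mem_union]; omega,
      card_union_of_disjoint (disjoint_left.2 fun w => by simp only [mem_range, mem_Icc]; omega)]
    simp only [card_range, Nat.card_Icc]; omega

/-- Part `p` as `3k` slots: the arc `(k+1)p, …, (k+1)p + k` with multiplicities `1, 3, …, 3, 2`,
`2, 3, …, 3, 1` and `3, …, 3` (the last arc has only `k` vertices). -/
def partVertex (k : ℕ) : Fin 3 → ℕ → ℕ
  | 0, t => (t + 2) / 3
  | 1, t => k + 1 + (t + 1) / 3
  | 2, t => 2 * k + 2 + t / 3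

def deficit {M : Type*} [AddCommMonoid M] (k : ℕ) (h : ℕ → M) : M :=
  2 • h 0 + h k + h (k + 1) + 2 • h (2 * k + 1)

theorem sum_partVertex_add_deficit {M : Type*} [AddCommMonoid M] (h : ℕ → M) :
    ∑ p : Fin 3, ∑ t ∈ range (3 * k), h (partVertex k p t) +
        (deficit k h + 3 • h (3 * k + 2)) =
      3 • ∑ w ∈ range (3 * k + 3), h w := by
  have h0 := sum_range_add_div_three h k 2 (by norm_num)
  have h1 := sum_range_add_div_three (fun s => h (k + 1 + s)) k 1 (by norm_num)
  have h2 := sum_range_add_div_three (fun s => h (2 * k + 2 + s)) k 0 (by norm_num)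
  simp only [add_zero, zero_smul, zero_add, one_smul, Nat.reduceSub] at h0 h1 h2
  rw [show k + 1 + k = 2 * k + 1 by ring] at h1
  rw [show 2 * k + 2 + k = 3 * k + 2 by ring] at h2
  rw [show 3 * k + 3 = (k + 1) + (k + 1) + (k + 1) by ring, sum_range_add, sum_range_add,
    smul_add, smul_add, ← h0, ← h1, show k + 1 + (k + 1) = 2 * k + 2 by ring, ← h2,
    Fin.sum_univ_three]
  simp only [partVertex, deficit]
  abel

theorem partVertex_bounds (p : Fin 3) {t : ℕ} (ht : t < 3 * k) :
    (k + 1) * p ≤ partVertex k p t ∧ partVertex k p t ≤ (k + 1) * p + k ∧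
      partVertex k p t < 3 * k + 2 := by
  fin_cases p <;> simp only [partVertex] <;> omega

theorem deficit_adj {x : ℕ} (hx : x < 3 * k + 2) (h0 : x ≠ 0) (h1 : x ≠ 2 * k + 1) :
    deficit k (fun w => if (graph k).Adj x w then 1 else 0) = 2 := by
  simp only [deficit, graph_adj, Nat.dist, smul_eq_mul]
  split_ifs <;> omega

variable {σ : ℕ}

def blowup (k σ : ℕ) (v : Fin 3 × Fin (3 * k * σ)) : ℕ := partVertex k v.1 v.2.divNat

theorem blowup_bounds (v : Fin 3 × Fin (3 * k * σ)) :
    (k + 1) * v.1 ≤ blowup k σ v ∧ blowup k σ v ≤ (k + 1) * v.1 + k ∧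
      blowup k σ v < 3 * k + 2 :=
  partVertex_bounds v.1 v.2.divNat.isLt

theorem fst_eq_iff_blowup_mem {v : Fin 3 × Fin (3 * k * σ)} {p : Fin 3} :
    v.1 = p ↔ (k + 1) * p ≤ blowup k σ v ∧ blowup k σ v ≤ (k + 1) * p + k := by
  obtain ⟨hq, hq', -⟩ := blowup_bounds v
  refine ⟨fun h => h ▸ ⟨hq, hq'⟩, fun ⟨hp, hp'⟩ => Fin.ext ?_⟩
  by_contra hne
  rcases lt_or_gt_of_ne hne with h | h <;> nlinarith

theorem card_blowup (P : ℕ → Prop) [DecidablePred P] :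
    #{v | P (blowup k σ v)} = σ * ∑ p, #{t ∈ range (3 * k) | P (partVertex k p t)} := by
  rw [card_filter, Fintype.sum_prod_type, mul_sum]
  refine sum_congr rfl fun p _ => ?_
  rw [card_filter, ← Fin.sum_univ_eq_sum_range (fun t => if P (partVertex k p t) then 1 else 0)]
  have := Fin.sum_divNat (n := σ) fun t : Fin (3 * k) => if P (partVertex k p t) then 1 else 0
  rwa [smul_eq_mul] at this

def blowupGraph (k σ : ℕ) : SimpleGraph (Fin 3 × Fin (3 * k * σ)) :=
  (graph k).comap (blowup k σ)

theorem blowupGraph_adj {u v : Fin 3 × Fin (3 * k * σ)} :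
    (blowupGraph k σ).Adj u v ↔ (graph k).Adj (blowup k σ u) (blowup k σ v) := Iff.rfl

theorem cliqueFree_blowupGraph : (blowupGraph k σ).CliqueFree 3 :=
  cliqueFree_graph.comap_fun _

theorem fst_ne_of_blowupGraph_adj {u v : Fin 3 × Fin (3 * k * σ)}
    (h : (blowupGraph k σ).Adj u v) : u.1 ≠ v.1 := by
  intro huv
  obtain ⟨hu, hu', -⟩ := blowup_bounds u
  obtain ⟨hv, hv'⟩ := fst_eq_iff_blowup_mem.1 huv.symm
  rw [blowupGraph_adj, graph_adj, Nat.dist] at h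
  generalize (k + 1) * (u.1 : ℕ) = c at *
  omega

theorem blowupGraph_adj_iff_of_blowup_eq_zero {v : Fin 3 × Fin (3 * k * σ)}
    (hv : blowup k σ v = 0) (w : Fin 3 × Fin (3 * k * σ)) :
    (blowupGraph k σ).Adj v w ↔ w.1 = 1 := by
  rw [blowupGraph_adj, graph_adj, hv, fst_eq_iff_blowup_mem, Fin.val_one, Nat.dist]
  omega

theorem blowupGraph_adj_iff_of_blowup_eq {v : Fin 3 × Fin (3 * k * σ)}
    (hv : blowup k σ v = 2 * k + 1) (w : Fin 3 × Fin (3 * k * σ)) :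
    (blowupGraph k σ).Adj v w ↔ w.1 = 0 := by
  have := (blowup_bounds w).2.2
  rw [blowupGraph_adj, graph_adj, hv, fst_eq_iff_blowup_mem, Fin.val_zero, Nat.dist]
  omega

theorem card_blowup_eq_add_deficit {y : ℕ} (hy : y < 3 * k + 2) :
    #{v | blowup k σ v = y} + σ * deficit k (fun w => if w = y then 1 else 0) = 3 * σ := by
  have := sum_partVertex_add_deficit (k := k) fun w => if w = y then 1 else 0
  simp only [sum_boole, Nat.cast_id, smul_eq_mul, filter_eq', mem_range, card_singleton,
    if_neg (show 3 * k + 2 ≠ y by omega), if_pos (show y < 3 * k + 3 by omega), mul_zero,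
    add_zero, mul_one] at this
  rw [card_blowup (· = y), ← mul_add, this, mul_comm]

theorem card_blowup_eq_zero (hk : 1 ≤ k) : #{v | blowup k σ v = 0} = σ := by
  have h := card_blowup_eq_add_deficit (σ := σ) (show 0 < 3 * k + 2 by omega)
  rw [show deficit k (fun w => if w = 0 then 1 else 0) = 2 by
    simp [deficit, show k ≠ 0 by omega]] at h
  omega

theorem card_blowup_eq_two_mul_add_one (hk : 1 ≤ k) : #{v | blowup k σ v = 2 * k + 1} = σ := by
  have h := card_blowup_eq_add_deficit (σ := σ) (show 2 * k + 1 < 3 * k + 2 by omega)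
  rw [show deficit k (fun w => if w = 2 * k + 1 then 1 else 0) = 2 by
    simp [deficit, show k ≠ 0 by omega, show k ≠ 2 * k + 1 by omega]] at h
  omega

theorem degree_blowupGraph (v : Fin 3 × Fin (3 * k * σ)) (h0 : blowup k σ v ≠ 0)
    (h1 : blowup k σ v ≠ 2 * k + 1) : (blowupGraph k σ).degree v = 3 * k * σ + σ := by
  set x := blowup k σ v
  have hx : x < 3 * k + 2 := (blowup_bounds v).2.2
  have h := sum_partVertex_add_deficit (k := k) fun w => if (graph k).Adj x w then 1 else 0
  rw [deficit_adj hx h0 h1, sum_range_succ, ← card_filter, card_filter_graph_adj hx] at h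
  simp only [← card_filter, smul_eq_mul] at h
  rw [show (blowupGraph k σ).degree v = _ from degree_comap (graph k) (blowup k σ) v,
    card_blowup ((graph k).Adj x),
    show ∑ p, #{t ∈ range (3 * k) | (graph k).Adj x (partVertex k p t)} = 3 * k + 1 by omega]
  ring

end Andrasfai

open Andrasfai in
theorem stmt_15_general (k σ : ℕ) (hk : 1 ≤ k) :
    ∃ (G : SimpleGraph (Fin 3 × Fin (3 * k * σ))) (U1 U2 : Finset (Fin 3 × Fin (3 * k * σ))),
      (∀ u v, G.Adj u v → u.1 ≠ v.1) ∧
      G.CliqueFree 3 ∧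
      (∀ v ∈ U1, v.1 = 0) ∧ (∀ v ∈ U2, v.1 = 1) ∧
      U1.card = σ ∧ U2.card = σ ∧
      (∀ v ∈ U1, ∀ w, G.Adj v w ↔ w.1 = 1) ∧
      (∀ v ∈ U2, ∀ w, G.Adj v w ↔ w.1 = 0) ∧
      (∀ v, v ∉ U1 → v ∉ U2 → G.degree v = 3 * k * σ + σ) := by
  refine ⟨blowupGraph k σ, univ.filter (blowup k σ · = 0),
    univ.filter (blowup k σ · = 2 * k + 1),
    fun _ _ => fst_ne_of_blowupGraph_adj, cliqueFree_blowupGraph, fun v hv => ?_, fun v hv => ?_,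
    card_blowup_eq_zero hk, card_blowup_eq_two_mul_add_one hk,
    fun v hv => blowupGraph_adj_iff_of_blowup_eq_zero ((mem_filter_univ v).1 hv),
    fun v hv => blowupGraph_adj_iff_of_blowup_eq ((mem_filter_univ v).1 hv),
    fun v h0 h1 => degree_blowupGraph v (by simpa using h0) (by simpa using h1)⟩
  · rw [fst_eq_iff_blowup_mem, (mem_filter_univ v).1 hv, Fin.val_zero]
    omega
  · rw [fst_eq_iff_blowup_mem, (mem_filter_univ v).1 hv, Fin.val_one]
    omega

/-- For every `k ≥ 1` and `σ ≥ 1` there is an `n × n × n` triangle-free tripartite graph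
(with `n = 3kσ`) containing sets `U1 ⊆ V1`, `U2 ⊆ V2` of size `σ` such that every vertex
of `U1` has neighbourhood exactly `V2`, every vertex of `U2` has neighbourhood exactly
`V1`, and every other vertex has degree exactly `n + σ`. -/
theorem stmt_15 (k σ : ℕ) (hk : 1 ≤ k) (hσ : 1 ≤ σ) :
    ∃ (G : SimpleGraph (Fin 3 × Fin (3 * k * σ))) (U1 U2 : Finset (Fin 3 × Fin (3 * k * σ))),
      (∀ u v, G.Adj u v → u.1 ≠ v.1) ∧
      G.CliqueFree 3 ∧
      (∀ v ∈ U1, v.1 = 0) ∧ (∀ v ∈ U2, v.1 = 1) ∧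
      U1.card = σ ∧ U2.card = σ ∧
      (∀ v ∈ U1, ∀ w, G.Adj v w ↔ w.1 = 1) ∧
      (∀ v ∈ U2, ∀ w, G.Adj v w ↔ w.1 = 0) ∧
      (∀ v, v ∉ U1 → v ∉ U2 → G.degree v = 3 * k * σ + σ) :=
  stmt_15_general k σ hk
end

section
/- Let G be an n × n × n tripartite graph with minimum degree at least n + τ, equipped with functions f⁺, f⁻ as in the booster setup. Let u be a vertex minimizing f⁺. Then u has a forward neighbour v, the edge uv is a booster (f⁺(u) ≤ f⁺(v)), and consequently u and v have at least τ common neighbours; in particular if τ ≥ 1 then G contains a triangle. -/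
/-!
Take a forward neighbour `v` of `u`; one exists since `f⁺(u) ≥ τ ≥ 1`. Minimality of `f⁺(u)` makes
`uv` a booster. The backward neighbours of `u` and the forward neighbours of `v` lie in the same part,
which has `n` vertices, so by inclusion–exclusion they share at least
`f⁻(u) + f⁺(v) - n ≥ f⁻(u) + f⁺(u) - n = τ` vertices, each completing a triangle with `u` and `v`.
-/

open scoped Classical

open Finset

theorem Finset.card_add_card_le_card_add_card_inter {α : Type*} [DecidableEq α]
    {s t r : Finset α} (hs : s ⊆ r) (ht : t ⊆ r) : #s + #t ≤ #r + #(s ∩ t) := by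
  rw [← card_union_add_card_inter]
  exact Nat.add_le_add_right (card_le_card (union_subset hs ht)) _

theorem card_backward_add_card_forward_le {V : Type} [Fintype V] (G : SimpleGraph V)
    (P : V → Fin 3) {u v : V} (hPv : P v = P u + 1) :
    #(univ.filter fun w => G.Adj u w ∧ P w = P u + 2) +
        #(univ.filter fun w => G.Adj v w ∧ P w = P v + 1) ≤
      #(univ.filter fun w => P w = P u + 2) +
        #(univ.filter fun w => G.Adj u w ∧ G.Adj v w ∧ P w = P u + 2) := by
  have hPv' : P v + 1 = P u + 2 := by rw [hPv, add_assoc]; rfl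
  refine (card_add_card_le_card_add_card_inter ?_ ?_).trans (Nat.add_le_add_left ?_ _)
  · exact monotone_filter_right _ fun _ _ hw => hw.2
  · exact monotone_filter_right _ fun _ _ hw => hPv' ▸ hw.2
  · refine card_le_card fun w hw => ?_
    simp only [mem_inter, mem_filter, mem_univ, true_and] at hw ⊢
    exact ⟨hw.1.1, hw.2.1, hw.1.2⟩

theorem stmt_18_general (n τ : ℕ) {V : Type} [Fintype V] (G : SimpleGraph V) (P : V → Fin 3)
    (hparts : ∀ i : Fin 3, (Finset.univ.filter fun v => P v = i).card = n)
    (fp fm : V → ℕ)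
    (hfp : ∀ v, τ ≤ fp v ∧ fp v ≤ (Finset.univ.filter fun w => G.Adj v w ∧ P w = P v + 1).card)
    (hfm : ∀ v, τ ≤ fm v ∧ fm v ≤ (Finset.univ.filter fun w => G.Adj v w ∧ P w = P v + 2).card)
    (hsum : ∀ v, fp v + fm v = n + τ)
    (u : V) (hmin : ∀ w, fp u ≤ fp w) (hτ : 1 ≤ τ) :
    ∃ v, G.Adj u v ∧ P v = P u + 1 ∧ fp u ≤ fp v ∧
      τ ≤ (Finset.univ.filter fun w => G.Adj u w ∧ G.Adj v w ∧ P w = P u + 2).card ∧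
      ∃ a b c : V, G.Adj a b ∧ G.Adj b c ∧ G.Adj a c := by
  obtain ⟨v, hv⟩ := card_pos.mp (hτ.trans ((hfp u).1.trans (hfp u).2))
  obtain ⟨huv, hPv⟩ := (mem_filter.mp hv).2
  have hcommon : τ ≤ #(univ.filter fun w => G.Adj u w ∧ G.Adj v w ∧ P w = P u + 2) := by
    have := card_backward_add_card_forward_le G P hPv
    have := (hfm u).2
    have := (hfp v).2
    have := hsum u
    have := hmin v
    have := hparts (P u + 2)
    omega
  obtain ⟨w, hw⟩ := card_pos.mp (hτ.trans hcommon)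
  obtain ⟨huw, hvw, -⟩ := (mem_filter.mp hw).2
  exact ⟨v, huv, hPv, hmin v, hcommon, u, v, w, huv, hvw, huw⟩

/-- Graver's argument: with `f⁺, f⁻` as in the booster setup and `τ ≥ 1`, a vertex `u`
minimising `f⁺` has a forward neighbour `v`, the edge `uv` is a booster, `u` and `v` have at
least `τ` common neighbours, and `G` contains a triangle. -/
theorem stmt_18 (n τ : ℕ) {V : Type} [Fintype V] (G : SimpleGraph V) (P : V → Fin 3)
    (hparts : ∀ i : Fin 3, (Finset.univ.filter fun v => P v = i).card = n)
    (htrip : ∀ u v, G.Adj u v → P u ≠ P v)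
    (hdeg : ∀ v, n + τ ≤ G.degree v)
    (fp fm : V → ℕ)
    (hfp : ∀ v, τ ≤ fp v ∧ fp v ≤ (Finset.univ.filter fun w => G.Adj v w ∧ P w = P v + 1).card)
    (hfm : ∀ v, τ ≤ fm v ∧ fm v ≤ (Finset.univ.filter fun w => G.Adj v w ∧ P w = P v + 2).card)
    (hsum : ∀ v, fp v + fm v = n + τ)
    (u : V) (hmin : ∀ w, fp u ≤ fp w) (hτ : 1 ≤ τ) :
    ∃ v, G.Adj u v ∧ P v = P u + 1 ∧ fp u ≤ fp v ∧
      τ ≤ (Finset.univ.filter fun w => G.Adj u w ∧ G.Adj v w ∧ P w = P u + 2).card ∧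
      ∃ a b c : V, G.Adj a b ∧ G.Adj b c ∧ G.Adj a c :=
  stmt_18_general n τ G P hparts fp fm hfp hfm hsum u hmin hτ
end
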